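/- Let F : [0,∞) → ℝ be defined by F(y) = −2^{−(n+1)} for y ∈ [2^n, 2^n + 1) with n ∈ ℕ, n ≥ 1, and F(y) = 0 otherwise, and let g : [0,∞) → ℝ be defined by g(y) = −1/(n+1) for y ∈ [2^n, 2^n + 1) with n ∈ ℕ, n ≥ 1, and g(y) = 0 otherwise. Then the function y ↦ g(y)·y·F(y) is nonnegative and is NOT Lebesgue integrable on [0,∞); indeed ∫_{[0,∞)} g(y)·y·F(y) dy = Σ_{n=1}^{∞} (1/(n+1))·(1/2 + 2^{−n−2}) = +∞. -/

import Mathlib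

open MeasureTheory Filter Set Function
open scoped ENNReal

/-!
On the block `[2^n, 2^n + 1)` the integrand equals `y / ((n+1) 2^(n+1)) ≥ 1 / (2(n+1))`. The
blocks are pairwise disjoint and have length one, so the integral over `[0, ∞)` dominates half of
the harmonic series; the same comparison makes the stated series diverge.
-/

theorem ENNReal.tsum_ofReal_eq_top_of_not_summable {α : Type*} {f : α → ℝ}
    (hf : ∀ a, 0 ≤ f a) (h : ¬ Summable f) : ∑' a, ENNReal.ofReal (f a) = ∞ := by
  by_contra hne
  exact h <| (ENNReal.summable_toReal hne).congr fun a => ENNReal.toReal_ofReal (hf a)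

theorem not_summable_one_div_two_mul_nat_add_one :
    ¬ Summable (fun n : ℕ => 1 / (2 * ((n : ℝ) + 1))) := by
  intro h
  refine (not_summable_iff_tendsto_nat_atTop_of_nonneg (fun n => by positivity)).mpr
    Real.tendsto_sum_range_one_div_nat_succ_atTop ?_
  exact (h.mul_left 2).congr fun n => by field_simp

theorem tendsto_sum_Icc_one_atTop_of_not_summable {u : ℕ → ℝ} (hu : ∀ n, 0 ≤ u n)
    (h : ¬ Summable u) : Tendsto (fun N => ∑ n ∈ Finset.Icc 1 N, u n) atTop atTop := by
  have hrange := ((not_summable_iff_tendsto_nat_atTop_of_nonneg hu).mp h).comp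
    (tendsto_add_atTop_nat 1)
  refine (tendsto_atTop_add_const_left _ (-u 0) hrange).congr fun N => ?_
  rw [comp_apply, Finset.sum_range_eq_add_Ico _ N.add_one_pos,
    ← Finset.Ico_add_one_right_eq_Icc]
  exact neg_add_cancel_left _ _

theorem pairwise_disjoint_Ico_two_pow :
    Pairwise (Disjoint on fun n : ℕ => Ico ((2 : ℝ) ^ n) (2 ^ n + 1)) := by
  have hlt : ∀ m n : ℕ, m < n →
      Disjoint (Ico ((2 : ℝ) ^ m) (2 ^ m + 1)) (Ico (2 ^ n) (2 ^ n + 1)) := by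
    intro m n hmn
    refine Ico_disjoint_Ico_same.mono_right (Ico_subset_Ico_left ?_)
    calc (2 : ℝ) ^ m + 1 ≤ 2 ^ m + 2 ^ m := by gcongr; exact one_le_pow₀ one_le_two
      _ = 2 ^ (m + 1) := by ring
      _ ≤ 2 ^ n := pow_le_pow_right₀ one_le_two hmn
  intro m n hmn
  rcases hmn.lt_or_gt with h | h
  · exact hlt m n h
  · exact (hlt n m h).symm

theorem setLIntegral_eq_top_of_le_on_pairwise_disjoint {α : Type*} [MeasurableSpace α]
    {μ : Measure α} {f : α → ℝ≥0∞} {s : Set α} {S : ℕ → Set α} {c : ℕ → ℝ≥0∞}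
    (hS : ∀ n, MeasurableSet (S n)) (hdisj : Pairwise (Disjoint on S)) (hsub : ∀ n, S n ⊆ s)
    (hf : ∀ n, ∀ x ∈ S n, c n ≤ f x) (hc : ∑' n, c n * μ (S n) = ∞) :
    ∫⁻ x in s, f x ∂μ = ∞ := by
  refine top_le_iff.mp ?_
  calc ∞ = ∑' n, c n * μ (S n) := hc.symm
    _ ≤ ∑' n, ∫⁻ x in S n, f x ∂μ := ENNReal.tsum_le_tsum fun n => by
        rw [← setLIntegral_const]
        exact setLIntegral_mono' (hS n) (hf n)
    _ = ∫⁻ x in ⋃ n, S n, f x ∂μ := (lintegral_iUnion hS hdisj f).symm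
    _ ≤ ∫⁻ x in s, f x ∂μ := lintegral_mono_set (iUnion_subset hsub)

theorem one_div_two_mul_le_of_two_pow_le {n : ℕ} {y : ℝ} (hy : 2 ^ n ≤ y) :
    1 / (2 * ((n : ℝ) + 1)) ≤ -(1 / ((n : ℝ) + 1)) * (y * -(1 / 2 ^ (n + 1))) := by
  have h : -(1 / ((n : ℝ) + 1)) * (y * -(1 / 2 ^ (n + 1))) = y / 2 ^ n / (2 * (n + 1)) := by
    field_simp
    ring
  rw [h]
  gcongr
  rwa [le_div_iff₀ (by positivity), one_mul]

theorem tendsto_sum_Icc_one_div_nat_add_one_mul_atTop :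
    Tendsto (fun N : ℕ => ∑ n ∈ Finset.Icc 1 N,
      (1 / ((n : ℝ) + 1)) * (1 / 2 + 2 ^ (-(n : ℤ) - 2))) atTop atTop := by
  refine tendsto_sum_Icc_one_atTop_of_not_summable (fun n => by positivity) fun hsum => ?_
  refine not_summable_one_div_two_mul_nat_add_one
    (hsum.of_nonneg_of_le (fun n => by positivity) fun n => ?_)
  calc 1 / (2 * ((n : ℝ) + 1)) = 1 / ((n : ℝ) + 1) * (1 / 2) := by field_simp
    _ ≤ 1 / ((n : ℝ) + 1) * (1 / 2 + 2 ^ (-(n : ℤ) - 2)) := by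
        gcongr
        exact le_add_of_nonneg_right (by positivity)

theorem g_y_F_not_integrable_general (F g : ℝ → ℝ)
    (hF1 : ∀ n : ℕ, 1 ≤ n → ∀ y ∈ Set.Ico ((2:ℝ)^n) ((2:ℝ)^n + 1),
      F y = -(1 / 2^(n+1)))
    (hg1 : ∀ n : ℕ, 1 ≤ n → ∀ y ∈ Set.Ico ((2:ℝ)^n) ((2:ℝ)^n + 1),
      g y = -(1 / ((n : ℝ) + 1)))
    (hg2 : ∀ y : ℝ, (∀ n : ℕ, 1 ≤ n → y ∉ Set.Ico ((2:ℝ)^n) ((2:ℝ)^n + 1)) → g y = 0) :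
    (∀ y : ℝ, 0 ≤ y → 0 ≤ g y * (y * F y)) ∧
    ¬ IntegrableOn (fun y => g y * (y * F y)) (Set.Ici 0) volume ∧
    (∫⁻ y in Set.Ici (0:ℝ), ENNReal.ofReal (g y * (y * F y))) = ⊤ ∧
    Tendsto (fun N : ℕ => ∑ n ∈ Finset.Icc 1 N,
      (1 / ((n : ℝ) + 1)) * (1/2 + 2^(-(n:ℤ)-2))) atTop atTop := by
  have hblock : ∀ n : ℕ, 1 ≤ n → ∀ y ∈ Ico ((2:ℝ)^n) ((2:ℝ)^n + 1),
      1 / (2 * ((n : ℝ) + 1)) ≤ g y * (y * F y) := by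
    intro n hn y hy
    rw [hg1 n hn y hy, hF1 n hn y hy]
    exact one_div_two_mul_le_of_two_pow_le hy.1
  have hnonneg : ∀ y : ℝ, 0 ≤ y → 0 ≤ g y * (y * F y) := by
    intro y _
    by_cases hin : ∃ n : ℕ, 1 ≤ n ∧ y ∈ Ico ((2:ℝ)^n) ((2:ℝ)^n + 1)
    · obtain ⟨n, hn, hy⟩ := hin
      exact (by positivity : (0:ℝ) ≤ 1 / (2 * ((n : ℝ) + 1))).trans (hblock n hn y hy)
    · rw [hg2 y fun n hn hy => hin ⟨n, hn, hy⟩, zero_mul]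
  have htop : ∫⁻ y in Ici (0:ℝ), ENNReal.ofReal (g y * (y * F y)) = ∞ := by
    refine setLIntegral_eq_top_of_le_on_pairwise_disjoint (fun _ => measurableSet_Ico)
      (pairwise_disjoint_Ico_two_pow.comp_of_injective (add_left_injective 1))
      (fun n y hy => (pow_pos two_pos (n + 1)).le.trans hy.1)
      (fun n y hy => ENNReal.ofReal_le_ofReal (hblock (n + 1) (Nat.le_add_left 1 n) y hy)) ?_
    simp only [Real.volume_Ico, add_sub_cancel_left, ENNReal.ofReal_one, mul_one]
    have hshift : ¬ Summable (fun n : ℕ => 1 / (2 * (((n + 1 : ℕ) : ℝ) + 1))) :=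
      fun h => not_summable_one_div_two_mul_nat_add_one ((summable_nat_add_iff 1).mp h)
    exact ENNReal.tsum_ofReal_eq_top_of_not_summable (fun n => by positivity) hshift
  exact ⟨hnonneg, fun hint => hint.lintegral_lt_top.ne htop, htop,
    tendsto_sum_Icc_one_div_nat_add_one_mul_atTop⟩

/-- With `F(y) = -2^{-(n+1)}` and `g(y) = -1/(n+1)` on `[2^n, 2^n+1)` for `n ≥ 1`
(both vanishing elsewhere), the function `y ↦ g(y)·y·F(y)` is nonnegative but not
Lebesgue integrable on `[0,∞)`: its integral is `∑_{n≥1} (1/(n+1))(1/2 + 2^{-n-2}) = +∞`. -/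
theorem g_y_F_not_integrable (F g : ℝ → ℝ)
    (hF1 : ∀ n : ℕ, 1 ≤ n → ∀ y ∈ Set.Ico ((2:ℝ)^n) ((2:ℝ)^n + 1),
      F y = -(1 / 2^(n+1)))
    (hF2 : ∀ y : ℝ, (∀ n : ℕ, 1 ≤ n → y ∉ Set.Ico ((2:ℝ)^n) ((2:ℝ)^n + 1)) → F y = 0)
    (hg1 : ∀ n : ℕ, 1 ≤ n → ∀ y ∈ Set.Ico ((2:ℝ)^n) ((2:ℝ)^n + 1),
      g y = -(1 / ((n : ℝ) + 1)))
    (hg2 : ∀ y : ℝ, (∀ n : ℕ, 1 ≤ n → y ∉ Set.Ico ((2:ℝ)^n) ((2:ℝ)^n + 1)) → g y = 0) :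
    (∀ y : ℝ, 0 ≤ y → 0 ≤ g y * (y * F y)) ∧
    ¬ IntegrableOn (fun y => g y * (y * F y)) (Set.Ici 0) volume ∧
    (∫⁻ y in Set.Ici (0:ℝ), ENNReal.ofReal (g y * (y * F y))) = ⊤ ∧
    Tendsto (fun N : ℕ => ∑ n ∈ Finset.Icc 1 N,
      (1 / ((n : ℝ) + 1)) * (1/2 + 2^(-(n:ℤ)-2))) atTop atTop :=
  g_y_F_not_integrable_general F g hF1 hg1 hg2
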